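/- arXiv:2305.00364 — 12 statements merged into one kernel-verified Lean document; each statement's English description precedes it below -/
import Mathlib

section
/- Let h : R₁ → R₂ be a φ₁-φ₂-homomorphism of commutative rings, where φ₁ and φ₂ are reduction functions of 𝓘(R₁) and 𝓘(R₂) respectively. If Q₂ is a φ₂-k-absorbing ideal of R₂, then the preimage h⁻¹(Q₂) is a φ₁-k-absorbing ideal of R₁. -/
open Finset

/-- A proper ideal `Q` is `φ`-`k`-absorbing if whenever a product of `k+1` elements
lies in `Q \ φ Q`, the product of some `k` of them lies in `Q`. -/
def IsPhiKAbsorbing {R : Type*} [CommRing R] (φ : Ideal R → Set R) (k : ℕ)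
    (Q : Ideal R) : Prop :=
  Q ≠ ⊤ ∧ ∀ r : Fin (k + 1) → R, (∏ i, r i) ∈ (Q : Set R) \ φ Q →
    ∃ j : Fin (k + 1), (∏ i ∈ univ.erase j, r i) ∈ Q

/-- A proper ideal `Q` is `k`-absorbing. -/
def IsKAbsorbing {R : Type*} [CommRing R] (k : ℕ) (Q : Ideal R) : Prop :=
  Q ≠ ⊤ ∧ ∀ r : Fin (k + 1) → R, (∏ i, r i) ∈ Q →
    ∃ j : Fin (k + 1), (∏ i ∈ univ.erase j, r i) ∈ Q

/-- A proper ideal `Q` is `φ`-`k`-absorbing primary: whenever a product of `k+1`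
elements `r 0, …, r k` lies in `Q \ φ Q`, either the product of the first `k` of them
lies in `Q`, or the product omitting some `r j` with `j ≠ Fin.last k` lies in `√Q`. -/
def IsPhiKAbsorbingPrimary {R : Type*} [CommRing R] (φ : Ideal R → Set R) (k : ℕ)
    (Q : Ideal R) : Prop :=
  Q ≠ ⊤ ∧ ∀ r : Fin (k + 1) → R, (∏ i, r i) ∈ (Q : Set R) \ φ Q →
    (∏ i ∈ univ.erase (Fin.last k), r i) ∈ Q ∨
      ∃ j : Fin (k + 1), j ≠ Fin.last k ∧ (∏ i ∈ univ.erase j, r i) ∈ Q.radical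

/-- A proper ideal `Q` is `k`-absorbing primary. -/
def IsKAbsorbingPrimary {R : Type*} [CommRing R] (k : ℕ) (Q : Ideal R) : Prop :=
  Q ≠ ⊤ ∧ ∀ r : Fin (k + 1) → R, (∏ i, r i) ∈ Q →
    (∏ i ∈ univ.erase (Fin.last k), r i) ∈ Q ∨
      ∃ j : Fin (k + 1), j ≠ Fin.last k ∧ (∏ i ∈ univ.erase j, r i) ∈ Q.radical

/-- A proper ideal `Q` is weakly `k`-absorbing primary. -/
def IsWeaklyKAbsorbingPrimary {R : Type*} [CommRing R] (k : ℕ) (Q : Ideal R) : Prop :=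
  Q ≠ ⊤ ∧ ∀ r : Fin (k + 1) → R, (∏ i, r i) ≠ 0 → (∏ i, r i) ∈ Q →
    (∏ i ∈ univ.erase (Fin.last k), r i) ∈ Q ∨
      ∃ j : Fin (k + 1), j ≠ Fin.last k ∧ (∏ i ∈ univ.erase j, r i) ∈ Q.radical

/-- `φ` is a reduction function on the ideals of `R`. -/
def IsReductionFunction {R : Type*} [CommRing R] (φ : Ideal R → Set R) : Prop :=
  (∀ P : Ideal R, φ P ⊆ (P : Set R)) ∧ ∀ P Q : Ideal R, P ≤ Q → φ P ⊆ φ Q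

theorem stmt3 {R₁ R₂ : Type*} [CommRing R₁] [CommRing R₂]
    (φ₁ : Ideal R₁ → Set R₁) (φ₂ : Ideal R₂ → Set R₂)
    (hφ₁ : IsReductionFunction φ₁) (hφ₂ : IsReductionFunction φ₂)
    (h : R₁ →+* R₂) (hhom : ∀ I : Ideal R₂, φ₁ (I.comap h) = h ⁻¹' (φ₂ I))
    (k : ℕ) (hk : 0 < k) (Q₂ : Ideal R₂) (hQ₂ : IsPhiKAbsorbing φ₂ k Q₂) :
    IsPhiKAbsorbing φ₁ k (Q₂.comap h) := by
  obtain ⟨hne, habs⟩ := hQ₂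
  constructor
  · intro htop
    exact hne (Ideal.eq_top_iff_one _ |>.mpr (by
      have : (1 : R₁) ∈ Q₂.comap h := htop ▸ trivial
      simpa using this))
  · intro r ⟨hmem, hnot⟩
    have h2 : (∏ i, h (r i)) ∈ (Q₂ : Set R₂) \ φ₂ Q₂ := by
      constructor
      · simpa [← map_prod] using hmem
      · intro hc
        apply hnot
        rw [hhom]
        simpa [← map_prod] using hc
    obtain ⟨j, hj⟩ := habs (fun i => h (r i)) h2
    exact ⟨j, by simpa [← map_prod] using hj⟩
end

section
/- Let Q and P be ideals of a commutative ring R and let φ be a reduction function of 𝓘(R) with P ⊆ φ(Q) ⊆ Q. Let φ_q : 𝓘(R/P) → 𝓘(R/P) ∪ {∅} be a function satisfying φ_q(Q/P) = φ(Q)/P, where Q/P denotes the image of Q in the quotient ring R/P. If Q is a φ-k-absorbing ideal of R, then Q/P is a φ_q-k-absorbing ideal of R/P. -/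
open Finset

theorem stmt5 {R : Type*} [CommRing R]
    (φ : Ideal R → Set R) (hφ : IsReductionFunction φ)
    (k : ℕ) (hk : 0 < k) (P Q : Ideal R)
    (hPφ : (P : Set R) ⊆ φ Q) (hφQ : φ Q ⊆ (Q : Set R))
    (φq : Ideal (R ⧸ P) → Set (R ⧸ P))
    (hφq : φq (Q.map (Ideal.Quotient.mk P)) = (Ideal.Quotient.mk P) '' (φ Q))
    (hQ : IsPhiKAbsorbing φ k Q) :
    IsPhiKAbsorbing φq k (Q.map (Ideal.Quotient.mk P)) := by
  obtain ⟨hQne, hQabs⟩ := hQ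
  have hPQ : P ≤ Q := fun x hx => hφQ (hPφ hx)
  have hcm : Ideal.comap (Ideal.Quotient.mk P) (Q.map (Ideal.Quotient.mk P)) = Q := by
    rw [Ideal.comap_map_of_surjective _ Ideal.Quotient.mk_surjective,
      ← RingHom.ker_eq_comap_bot, Ideal.mk_ker, sup_eq_left.mpr hPQ]
  constructor
  · intro htop
    apply hQne
    rw [← hcm, htop, Ideal.comap_top]
  · intro r hr
    choose s hs using fun i => Ideal.Quotient.mk_surjective (r i)
    have hmk : Ideal.Quotient.mk P (∏ i, s i) = ∏ i, r i := by
      rw [map_prod]; exact Finset.prod_congr rfl fun i _ => hs i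
    have hsQ : (∏ i, s i) ∈ Q := by
      rw [← hcm]; exact Ideal.mem_comap.mpr (hmk ▸ hr.1)
    have hsφ : (∏ i, s i) ∉ φ Q := by
      intro h
      exact hr.2 (hφq ▸ ⟨∏ i, s i, h, hmk⟩)
    obtain ⟨j, hj⟩ := hQabs s ⟨hsQ, hsφ⟩
    refine ⟨j, ?_⟩
    have : Ideal.Quotient.mk P (∏ i ∈ univ.erase j, s i) ∈ Q.map (Ideal.Quotient.mk P) :=
      Ideal.mem_map_of_mem _ hj
    rwa [map_prod, Finset.prod_congr rfl fun i _ => hs i] at this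
end

section
/- Let R be a commutative ring, Q a proper ideal of R, and φ a reduction function of 𝓘(R) such that φ(Q) is a proper ideal of R which is k-absorbing primary. If Q is a φ-k-absorbing primary ideal of R, then Q is a k-absorbing primary ideal of R. -/
open Finset

theorem stmt6 {R : Type*} [CommRing R]
    (φ : Ideal R → Set R) (hφ : IsReductionFunction φ)
    (k : ℕ) (hk : 0 < k) (Q J : Ideal R) (hJ : φ Q = (J : Set R))
    (hJprimary : IsKAbsorbingPrimary k J)
    (hQ : IsPhiKAbsorbingPrimary φ k Q) :
    IsKAbsorbingPrimary k Q := by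
  have hJQ : J ≤ Q := fun x hx => hφ.1 Q (hJ ▸ hx)
  refine ⟨hQ.1, fun r hr => ?_⟩
  by_cases hmem : (∏ i, r i) ∈ φ Q
  · rw [hJ] at hmem
    rcases hJprimary.2 r hmem with h | ⟨j, hj, hjm⟩
    · exact Or.inl (hJQ h)
    · exact Or.inr ⟨j, hj, Ideal.radical_mono hJQ hjm⟩
  · exact hQ.2 r ⟨hr, hmem⟩
end

section
/- Let R be a commutative ring, Q a proper ideal of R, and φ : 𝓘(R) → 𝓘(R) ∪ {∅} a function such that √(φ(Q)) = φ(√Q) (in particular φ(Q) is an ideal). If Q is a φ-k-absorbing primary ideal of R, then the radical √Q is a φ-k-absorbing ideal of R. -/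
open Finset

theorem stmt7 {R : Type*} [CommRing R]
    (φ : Ideal R → Set R) (k : ℕ) (hk : 0 < k)
    (Q J : Ideal R) (hJ : φ Q = (J : Set R))
    (hrad : (J.radical : Set R) = φ Q.radical)
    (hQ : IsPhiKAbsorbingPrimary φ k Q) :
    IsPhiKAbsorbing φ k Q.radical := by
  obtain ⟨hQtop, hQ⟩ := hQ
  refine ⟨fun h => hQtop (Ideal.radical_eq_top.mp h), ?_⟩
  rintro r ⟨hmem, hnot⟩
  obtain ⟨n, hn⟩ := hmem
  have hnotJ : (∏ i, r i) ^ n ∉ φ Q := by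
    intro hc
    apply hnot
    rw [← hrad]
    exact Ideal.mem_radical_of_pow_mem (Ideal.le_radical (show _ ∈ J by rwa [hJ] at hc))
  have hprod : (∏ i, (r i) ^ n) ∈ (Q : Set R) \ φ Q := by
    rw [Finset.prod_pow]
    exact ⟨hn, hnotJ⟩
  rcases hQ (fun i => (r i) ^ n) hprod with h | ⟨j, _, h⟩
  · refine ⟨Fin.last k, ?_⟩
    rw [Finset.prod_pow] at h
    exact ⟨n, h⟩
  · refine ⟨j, ?_⟩
    rw [Finset.prod_pow] at h
    exact Ideal.mem_radical_of_pow_mem h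
end

section
/- Let R be a commutative ring and φ : 𝓘(R) → 𝓘(R) ∪ {∅} a function. If a proper ideal Q of R is a φ-k-absorbing primary ideal, then Q is a φ-s-absorbing primary ideal for every integer s ≥ k. -/
open Finset

lemma prod_erase_last {R : Type*} [CommRing R] {n : ℕ} (f : Fin (n + 1) → R) :
    (∏ i ∈ univ.erase (Fin.last n), f i) = ∏ i : Fin n, f i.castSucc := by
  rw [Fin.univ_castSuccEmb, Finset.erase_cons, Finset.prod_map]
  rfl

lemma prod_map_castSucc {R : Type*} [CommRing R] {n : ℕ} (f : Fin (n + 1) → R)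
    (s : Finset (Fin n)) :
    (∏ i ∈ s.map Fin.castSuccEmb, f i) = ∏ i ∈ s, f i.castSucc :=
  Finset.prod_map s Fin.castSuccEmb f

lemma step {R : Type*} [CommRing R] (φ : Ideal R → Set R) (k : ℕ) (Q : Ideal R)
    (hQ : IsPhiKAbsorbingPrimary φ k Q) : IsPhiKAbsorbingPrimary φ (k + 1) Q := by
  obtain ⟨hQtop, h⟩ := hQ
  refine ⟨hQtop, fun r hr => ?_⟩
  set r' : Fin (k + 1) → R := fun i =>
    if i = Fin.last k then r (Fin.last k).castSucc * r (Fin.last (k + 1)) else r i.castSucc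
    with hr'
  have hlast : r' (Fin.last k) = r (Fin.last k).castSucc * r (Fin.last (k + 1)) := by
    simp [hr']
  have hne : ∀ i : Fin (k + 1), i ≠ Fin.last k → r' i = r i.castSucc := by
    intro i hi; simp [hr', hi]
  -- product of r' equals product of r
  have key : (∏ i, r' i) = ∏ i, r i := by
    rw [← Finset.mul_prod_erase univ r' (mem_univ (Fin.last k)),
      Finset.prod_congr rfl (fun i hi => hne i (Finset.ne_of_mem_erase hi)),
      prod_erase_last (fun i => r i.castSucc), hlast,
      Fin.prod_univ_castSucc r,
      Fin.prod_univ_castSucc (fun i : Fin (k + 1) => r i.castSucc)]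
    ring
  rw [← key] at hr
  rcases h r' hr with hA | ⟨j, hj, hB⟩
  · left
    have hA' : (∏ i : Fin k, r i.castSucc.castSucc) ∈ Q := by
      rwa [Finset.prod_congr rfl (fun i hi => hne i (Finset.ne_of_mem_erase hi)),
        prod_erase_last (fun i => r i.castSucc)] at hA
    rw [prod_erase_last r, Fin.prod_univ_castSucc (fun i : Fin (k + 1) => r i.castSucc)]
    exact Ideal.mul_mem_right _ _ hA'
  · right
    refine ⟨j.castSucc, (Fin.castSucc_lt_last j).ne, ?_⟩
    have hmem : Fin.last k ∈ univ.erase j := Finset.mem_erase.mpr ⟨hj.symm, mem_univ _⟩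
    have claim : (∏ i ∈ univ.erase j.castSucc, r i) = ∏ i ∈ univ.erase j, r' i := by
      rw [Fin.univ_castSuccEmb (k + 1),
        Finset.erase_cons_of_ne _ (Fin.castSucc_lt_last j).ne',
        Finset.prod_cons, show j.castSucc = Fin.castSuccEmb j from rfl,
        ← Finset.map_erase, prod_map_castSucc,
        ← Finset.mul_prod_erase (univ.erase j) r' hmem,
        ← Finset.mul_prod_erase (univ.erase j) (fun x => r x.castSucc) hmem,
        hlast,
        Finset.prod_congr rfl (fun i hi => hne i (Finset.ne_of_mem_erase hi))]
      ring
    rwa [claim]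

theorem stmt8 {R : Type*} [CommRing R] (φ : Ideal R → Set R) (k : ℕ) (hk : 0 < k)
    (Q : Ideal R) (hQ : IsPhiKAbsorbingPrimary φ k Q) :
    ∀ s : ℕ, k ≤ s → IsPhiKAbsorbingPrimary φ s Q := by
  intro s hs
  induction s, hs using Nat.le_induction with
  | base => exact hQ
  | succ n hn ih => exact step φ n Q ih
end

section
/- Let R be a commutative ring, Q a proper ideal of R, and φ : 𝓘(R) → 𝓘(R) ∪ {∅} a function such that φ(Q) is an ideal of R contained in Q. Then Q is a φ-2-absorbing primary ideal of R if and only if the image Q/φ(Q) is a weakly 2-absorbing primary ideal of the quotient ring R/φ(Q). -/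
open Finset

theorem stmt11 {R : Type*} [CommRing R] (φ : Ideal R → Set R)
    (Q J : Ideal R) (hQtop : Q ≠ ⊤) (hJ : φ Q = (J : Set R)) (hJQ : J ≤ Q) :
    IsPhiKAbsorbingPrimary φ 2 Q ↔
      IsWeaklyKAbsorbingPrimary 2 (Q.map (Ideal.Quotient.mk J)) := by
  have hcomap : (Q.map (Ideal.Quotient.mk J)).comap (Ideal.Quotient.mk J) = Q := by
    rw [Ideal.comap_map_of_surjective _ Ideal.Quotient.mk_surjective]
    rw [← RingHom.ker_eq_comap_bot, Ideal.mk_ker]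
    exact sup_eq_left.mpr hJQ
  have hmem : ∀ x : R, Ideal.Quotient.mk J x ∈ Q.map (Ideal.Quotient.mk J) ↔ x ∈ Q := by
    intro x
    constructor
    · intro h; rw [← hcomap]; exact h
    · intro h; exact Ideal.mem_map_of_mem _ h
  constructor
  · rintro ⟨_, h⟩
    constructor
    · intro htop
      apply hQtop
      rw [← hcomap, htop, Ideal.comap_top]
    · intro r hne hr
      choose s hs using fun i => Ideal.Quotient.mk_surjective (r i)
      have hps : Ideal.Quotient.mk J (∏ i, s i) = ∏ i, r i := by
        rw [map_prod]; exact Finset.prod_congr rfl fun i _ => hs i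
      have hQs : (∏ i, s i) ∈ Q := by rw [← hmem, hps]; exact hr
      have hnJ : (∏ i, s i) ∉ φ Q := by
        rw [hJ]
        intro hmemJ
        apply hne
        rw [← hps, Ideal.Quotient.eq_zero_iff_mem]
        exact hmemJ
      rcases h s ⟨hQs, hnJ⟩ with h1 | ⟨j, hj, hj2⟩
      · left
        have : Ideal.Quotient.mk J (∏ i ∈ univ.erase (Fin.last 2), s i)
            = ∏ i ∈ univ.erase (Fin.last 2), r i := by
          rw [map_prod]; exact Finset.prod_congr rfl fun i _ => hs i
        rw [← this]; exact Ideal.mem_map_of_mem _ h1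
      · right
        refine ⟨j, hj, ?_⟩
        have heq : Ideal.Quotient.mk J (∏ i ∈ univ.erase j, s i)
            = ∏ i ∈ univ.erase j, r i := by
          rw [map_prod]; exact Finset.prod_congr rfl fun i _ => hs i
        rw [← heq]
        exact Ideal.map_radical_le (f := Ideal.Quotient.mk J) (Ideal.mem_map_of_mem _ hj2)
  · rintro ⟨_, h⟩
    refine ⟨hQtop, ?_⟩
    intro r hr
    obtain ⟨hrQ, hrφ⟩ := hr
    have hne : (∏ i, Ideal.Quotient.mk J (r i)) ≠ 0 := by
      rw [← map_prod, ne_eq, Ideal.Quotient.eq_zero_iff_mem]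
      intro hmemJ
      exact hrφ (by rw [hJ]; exact hmemJ)
    have hin : (∏ i, Ideal.Quotient.mk J (r i)) ∈ Q.map (Ideal.Quotient.mk J) := by
      rw [← map_prod]; exact Ideal.mem_map_of_mem _ hrQ
    have hradcomap : ((Q.map (Ideal.Quotient.mk J)).radical).comap (Ideal.Quotient.mk J)
        = Q.radical := by
      rw [Ideal.comap_radical, hcomap]
    rcases h (fun i => Ideal.Quotient.mk J (r i)) hne hin with h1 | ⟨j, hj, hj2⟩
    · left
      rw [← hmem, map_prod]
      exact h1
    · right
      refine ⟨j, hj, ?_⟩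
      rw [← hradcomap]
      have : (Ideal.Quotient.mk J) (∏ i ∈ univ.erase j, r i)
          ∈ ((Q.map (Ideal.Quotient.mk J)).radical) := by
        rw [map_prod]; exact hj2
      exact this
end

section
/- Let R be a commutative ring, φ : 𝓘(R) → 𝓘(R) ∪ {∅} a function, and Q a φ-2-absorbing primary ideal of R such that φ(Q) is an ideal of R contained in Q. For x, y, z ∈ R, the triple (x, y, z) is a φ-2-primary triple of Q if and only if the triple of cosets (x + φ(Q), y + φ(Q), z + φ(Q)) is a 2-zero primary triple of the ideal Q/φ(Q) in the quotient ring R/φ(Q). -/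
open Finset

theorem stmt12 {R : Type*} [CommRing R] (φ : Ideal R → Set R)
    (Q J : Ideal R) (hJ : φ Q = (J : Set R)) (hJQ : J ≤ Q)
    (hQ : IsPhiKAbsorbingPrimary φ 2 Q) (x y z : R) :
    (x * y * z ∈ φ Q ∧ x * y ∉ Q ∧ y * z ∉ Q.radical ∧ x * z ∉ Q.radical) ↔
      (Ideal.Quotient.mk J x * Ideal.Quotient.mk J y * Ideal.Quotient.mk J z = 0 ∧
        Ideal.Quotient.mk J x * Ideal.Quotient.mk J y ∉ Q.map (Ideal.Quotient.mk J) ∧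
        Ideal.Quotient.mk J y * Ideal.Quotient.mk J z ∉
          (Q.map (Ideal.Quotient.mk J)).radical ∧
        Ideal.Quotient.mk J x * Ideal.Quotient.mk J z ∉
          (Q.map (Ideal.Quotient.mk J)).radical) := by
  have hmem : ∀ a : R, Ideal.Quotient.mk J a ∈ Q.map (Ideal.Quotient.mk J) ↔ a ∈ Q :=
    fun a => Ideal.mem_quotient_iff_mem hJQ
  have hrad : ∀ a : R,
      Ideal.Quotient.mk J a ∈ (Q.map (Ideal.Quotient.mk J)).radical ↔ a ∈ Q.radical := by
    intro a
    simp only [Ideal.mem_radical_iff, ← map_pow, hmem]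
  have hzero : (Ideal.Quotient.mk J (x * y * z) = 0) ↔ x * y * z ∈ φ Q := by
    rw [Ideal.Quotient.eq_zero_iff_mem, hJ]; rfl
  constructor
  · rintro ⟨h1, h2, h3, h4⟩
    refine ⟨?_, ?_, ?_, ?_⟩
    · rw [← map_mul, ← map_mul, hzero]; exact h1
    · rw [← map_mul, hmem]; exact h2
    · rw [← map_mul, hrad]; exact h3
    · rw [← map_mul, hrad]; exact h4
  · rintro ⟨h1, h2, h3, h4⟩
    rw [← map_mul, ← map_mul, hzero] at h1
    rw [← map_mul, hmem] at h2
    rw [← map_mul, hrad] at h3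
    rw [← map_mul, hrad] at h4
    exact ⟨h1, h2, h3, h4⟩
end

section
/- Let R be a commutative ring, φ : 𝓘(R) → 𝓘(R) ∪ {∅} a function, and Q a φ-2-absorbing primary ideal of R such that φ(Q) is an ideal of R contained in Q. If (x, y, z) is a φ-2-primary triple of Q, then: (1) xyq ∈ φ(Q), yzq ∈ φ(Q) and xzq ∈ φ(Q) for every q ∈ Q; (2) x q q' ∈ φ(Q), y q q' ∈ φ(Q) and z q q' ∈ φ(Q) for all q, q' ∈ Q; and (3) q q' q'' ∈ φ(Q) for all q, q', q'' ∈ Q. -/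
open Finset

/-!
Whether `ab ∈ Q`, `bc ∈ √Q`, `ac ∈ √Q` and `abc ∈ Q` hold depends only on the classes of
`a, b, c` modulo `Q`. Hence for all `q₁ q₂ q₃ ∈ Q` the triple `(x + q₁, y + q₂, z + q₃)` is again a
`φ`-2-primary triple, so `(x + q₁)(y + q₂)(z + q₃) ∈ φ(Q)`. Every element in the statement is an
alternating sum of such products (a finite difference of the trilinear map `(a, b, c) ↦ abc`),
and `φ(Q)` is an ideal.
-/

theorem Ideal.mul_mem_iff_of_sub_mem {R : Type*} [CommRing R] {I : Ideal R} {a b x y : R}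
    (ha : a - x ∈ I) (hb : b - y ∈ I) : a * b ∈ I ↔ x * y ∈ I := by
  simp only [← Ideal.Quotient.eq_zero_iff_mem, map_mul, Ideal.Quotient.eq.2 ha,
    Ideal.Quotient.eq.2 hb]

namespace IsPhiKAbsorbingPrimary

variable {R : Type*} [CommRing R] {φ : Ideal R → Set R} {Q : Ideal R}

theorem mul_mem_or_of_mul_mul_mem {a b c : R} (hQ : IsPhiKAbsorbingPrimary φ 2 Q)
    (habc : a * b * c ∈ Q) (habc' : a * b * c ∉ φ Q) :
    a * b ∈ Q ∨ b * c ∈ Q.radical ∨ a * c ∈ Q.radical := by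
  have hprod : ∏ i, ![a, b, c] i = a * b * c := by simp [Fin.prod_univ_three]
  rcases hQ.2 ![a, b, c] (hprod ▸ ⟨habc, habc'⟩) with h | ⟨j, hj, h⟩
  · left
    simpa [show univ.erase (2 : Fin 3) = {0, 1} by decide] using h
  · fin_cases j
    · exact Or.inr (Or.inl (by simpa [show univ.erase (0 : Fin 3) = {1, 2} by decide] using h))
    · exact Or.inr (Or.inr (by simpa [show univ.erase (1 : Fin 3) = {0, 2} by decide] using h))
    · exact absurd rfl hj

theorem mul_mul_mem_of_sub_mem {x y z a b c : R} (hQ : IsPhiKAbsorbingPrimary φ 2 Q)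
    (hxyz : x * y * z ∈ Q) (hxy : x * y ∉ Q) (hyz : y * z ∉ Q.radical) (hxz : x * z ∉ Q.radical)
    (ha : a - x ∈ Q) (hb : b - y ∈ Q) (hc : c - z ∈ Q) : a * b * c ∈ φ Q := by
  have rad {u v : R} (h : u - v ∈ Q) : u - v ∈ Q.radical := Ideal.le_radical h
  have hab : a * b - x * y ∈ Q := Q.mul_sub_mul_mem ha hb
  have habc : a * b * c ∈ Q := (Ideal.mul_mem_iff_of_sub_mem hab hc).2 hxyz
  by_contra habc'
  rcases hQ.mul_mem_or_of_mul_mul_mem habc habc' with h | h | h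
  · exact hxy ((Ideal.mul_mem_iff_of_sub_mem ha hb).1 h)
  · exact hyz ((Ideal.mul_mem_iff_of_sub_mem (rad hb) (rad hc)).1 h)
  · exact hxz ((Ideal.mul_mem_iff_of_sub_mem (rad ha) (rad hc)).1 h)

end IsPhiKAbsorbingPrimary

theorem stmt13 {R : Type*} [CommRing R] (φ : Ideal R → Set R)
    (Q J : Ideal R) (hJ : φ Q = (J : Set R)) (hJQ : J ≤ Q)
    (hQ : IsPhiKAbsorbingPrimary φ 2 Q) (x y z : R)
    (htriple : x * y * z ∈ φ Q ∧ x * y ∉ Q ∧ y * z ∉ Q.radical ∧ x * z ∉ Q.radical) :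
    (∀ q ∈ Q, x * y * q ∈ φ Q ∧ y * z * q ∈ φ Q ∧ x * z * q ∈ φ Q) ∧
    (∀ q ∈ Q, ∀ q' ∈ Q, x * q * q' ∈ φ Q ∧ y * q * q' ∈ φ Q ∧ z * q * q' ∈ φ Q) ∧
    (∀ q ∈ Q, ∀ q' ∈ Q, ∀ q'' ∈ Q, q * q' * q'' ∈ φ Q) := by
  obtain ⟨hxyz, hxy, hyz, hxz⟩ := htriple
  rw [hJ] at hxyz ⊢
  have hmem {a b c : R} (ha : a - x ∈ Q) (hb : b - y ∈ Q) (hc : c - z ∈ Q) : a * b * c ∈ J := by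
    rw [← SetLike.mem_coe, ← hJ]
    exact hQ.mul_mul_mem_of_sub_mem (hJQ hxyz) hxy hyz hxz ha hb hc
  refine ⟨fun q hq => ⟨?_, ?_, ?_⟩, fun q hq q' hq' => ⟨?_, ?_, ?_⟩,
    fun q hq q' hq' q'' hq'' => ?_⟩
  on_goal 1 => rw [show x * y * q = x * y * (z + q) - x * y * z by ring]
  on_goal 2 => rw [show y * z * q = (x + q) * y * z - x * y * z by ring]
  on_goal 3 => rw [show x * z * q = x * (y + q) * z - x * y * z by ring]
  on_goal 4 => rw [show x * q * q' = x * (y + q) * (z + q') - x * (y + q) * z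
    - x * y * (z + q') + x * y * z by ring]
  on_goal 5 => rw [show y * q * q' = (x + q) * y * (z + q') - (x + q) * y * z
    - x * y * (z + q') + x * y * z by ring]
  on_goal 6 => rw [show z * q * q' = (x + q) * (y + q') * z - (x + q) * y * z
    - x * (y + q') * z + x * y * z by ring]
  on_goal 7 => rw [show q * q' * q'' = (x + q) * (y + q') * (z + q'') - (x + q) * (y + q') * z
    - (x + q) * y * (z + q'') - x * (y + q') * (z + q'') + (x + q) * y * z + x * (y + q') * z
    + x * y * (z + q'') - x * y * z by ring]
  all_goals
    rw [SetLike.mem_coe]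
    repeat' first | apply J.add_mem | apply J.sub_mem | apply hmem
    all_goals simp [*]
end

section
/- Let R be a commutative ring, k a positive integer, Q a proper ideal of R, and φ : 𝓘(R) → 𝓘(R) ∪ {∅} a function such that φ(Q) is an ideal of R contained in Q. If Q is a φ-k-absorbing primary ideal of R but Q is not a k-absorbing primary ideal of R, then Q^{k+1} ⊆ φ(Q), where Q^{k+1} denotes the (k+1)-st power of the ideal Q. -/
open Finset

section Aux

variable {R : Type*} [CommRing R]

lemma prodAddSubMem {ι : Type*} [DecidableEq ι] (Q : Ideal R) (s : Finset ι)
    (r g : ι → R) (hg : ∀ i, g i ∈ Q) :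
    (∏ i ∈ s, (r i + g i)) - ∏ i ∈ s, r i ∈ Q := by
  classical
  induction s using Finset.induction with
  | empty => simp
  | @insert a s ha ih =>
    rw [Finset.prod_insert ha, Finset.prod_insert ha]
    have h : (r a + g a) * ∏ i ∈ s, (r i + g i) - r a * ∏ i ∈ s, r i
        = r a * ((∏ i ∈ s, (r i + g i)) - ∏ i ∈ s, r i)
          + g a * ∏ i ∈ s, (r i + g i) := by ring
    rw [h]
    exact Q.add_mem (Q.mul_mem_left _ ih) (Q.mul_mem_right _ (hg a))

lemma powLeOfForallProd (Q : Ideal R) :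
    ∀ (n : ℕ) (J : Ideal R), (∀ q : Fin n → R, (∀ i, q i ∈ Q) → (∏ i, q i) ∈ J) → Q ^ n ≤ J := by
  intro n
  induction n with
  | zero =>
    intro J h
    rw [pow_zero, Ideal.one_eq_top, top_le_iff, Ideal.eq_top_iff_one]
    simpa using h ![] (by simp)
  | succ n ih =>
    intro J h
    rw [pow_succ]
    refine Ideal.mul_le.mpr fun a ha b hb => ?_
    rw [← Ideal.mem_colon_span_singleton]
    refine ih (J.colon (Ideal.span {b})) (fun q hq => ?_) ha
    rw [Ideal.mem_colon_span_singleton]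
    have := h (Fin.cons b q) (fun i => Fin.cases hb hq i)
    rwa [Fin.prod_cons, mul_comm] at this

end Aux

theorem stmt15 {R : Type*} [CommRing R] (φ : Ideal R → Set R) (k : ℕ) (hk : 0 < k)
    (Q J : Ideal R) (hJ : φ Q = (J : Set R)) (hJQ : J ≤ Q)
    (hQ : IsPhiKAbsorbingPrimary φ k Q) (hnot : ¬ IsKAbsorbingPrimary k Q) :
    ((Q ^ (k + 1) : Ideal R) : Set R) ⊆ φ Q := by
  intro x hx
  by_contra hxφ
  refine hnot ⟨hQ.1, fun r hr => ?_⟩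
  by_contra hP
  push_neg at hP
  obtain ⟨hP1, hP2⟩ := hP
  classical
  have claim : ∀ T : Finset (Fin (k + 1)), ∀ q : Fin (k + 1) → R,
      (∀ i ∈ T, q i ∈ Q) → (∏ i ∈ univ \ T, r i) * ∏ i ∈ T, q i ∈ J := by
    intro T
    induction T using Finset.strongInductionOn with
    | _ T ih =>
      intro q hq
      by_contra hc
      set g : Fin (k + 1) → R := fun i => if i ∈ T then q i else 0 with hgdef
      have hg : ∀ i, g i ∈ Q := by
        intro i
        by_cases h : i ∈ T
        · simpa [hgdef, h] using hq i h
        · simp [hgdef, h]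
      have hexp : (∏ i, (r i + g i))
          = ∑ S ∈ T.powerset, (∏ i ∈ S, q i) * ∏ i ∈ univ \ S, r i := by
        rw [show (∏ i, (r i + g i)) = ∏ i, (g i + r i) by
          exact Finset.prod_congr rfl fun i _ => add_comm _ _]
        rw [Finset.prod_add]
        refine ((Finset.sum_subset
          (Finset.powerset_mono.mpr (Finset.subset_univ T)) ?_).symm.trans ?_)
        · intro S hS hSn
          have hnsub : ¬ S ⊆ T := by simpa [Finset.mem_powerset] using hSn
          obtain ⟨i, hiS, hiT⟩ := Finset.not_subset.mp hnsub
          rw [Finset.prod_eq_zero hiS (by simp [hgdef, hiT]), zero_mul]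
        · refine Finset.sum_congr rfl fun S hS => ?_
          have hST : S ⊆ T := Finset.mem_powerset.mp hS
          congr 1
          exact Finset.prod_congr rfl fun i hi => by simp [hgdef, hST hi]
      have hTsplit : (∏ i, (r i + g i))
          = (∏ i ∈ T, q i) * (∏ i ∈ univ \ T, r i)
            + ∑ S ∈ T.powerset.erase T, (∏ i ∈ S, q i) * ∏ i ∈ univ \ S, r i := by
        rw [hexp, ← Finset.add_sum_erase _ _ (Finset.mem_powerset_self T)]
      have hd : (∑ S ∈ T.powerset.erase T, (∏ i ∈ S, q i) * ∏ i ∈ univ \ S, r i) ∈ J := by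
        refine Ideal.sum_mem _ fun S hS => ?_
        have h1 : S ⊆ T := Finset.mem_powerset.mp (Finset.mem_of_mem_erase hS)
        have hss : S ⊂ T :=
          Finset.ssubset_iff_subset_ne.mpr ⟨h1, Finset.ne_of_mem_erase hS⟩
        have := ih S hss q (fun i hi => hq i (h1 hi))
        rwa [mul_comm] at this
      have hbQ : (∏ i, (r i + g i)) ∈ Q := by
        have hsub := prodAddSubMem Q Finset.univ r g hg
        have h2 : (∏ i, (r i + g i))
            = ((∏ i, (r i + g i)) - ∏ i, r i) + ∏ i, r i := by ring
        rw [h2]; exact Q.add_mem hsub hr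
      have hbJ : (∏ i, (r i + g i)) ∉ J := by
        intro hmem
        apply hc
        have h3 : (∏ i ∈ T, q i) * (∏ i ∈ univ \ T, r i) ∈ J := by
          have h4 := J.sub_mem hmem hd
          rwa [hTsplit, add_sub_cancel_right] at h4
        rwa [mul_comm] at h3
      obtain hA | ⟨j, hjne, hB⟩ :=
        hQ.2 (fun i => r i + g i) ⟨hbQ, fun h => hbJ (by rwa [hJ] at h)⟩
      · refine hP1 ?_
        have hsub := prodAddSubMem Q (univ.erase (Fin.last k)) r g hg
        have h2 : (∏ i ∈ univ.erase (Fin.last k), r i)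
            = (∏ i ∈ univ.erase (Fin.last k), (r i + g i))
              - ((∏ i ∈ univ.erase (Fin.last k), (r i + g i))
                  - ∏ i ∈ univ.erase (Fin.last k), r i) := by ring
        rw [h2]; exact Q.sub_mem hA hsub
      · refine hP2 j hjne ?_
        have hsub := prodAddSubMem Q (univ.erase j) r g hg
        have h2 : (∏ i ∈ univ.erase j, r i)
            = (∏ i ∈ univ.erase j, (r i + g i))
              - ((∏ i ∈ univ.erase j, (r i + g i)) - ∏ i ∈ univ.erase j, r i) := by ring
        rw [h2]
        exact Ideal.sub_mem _ hB (Q.le_radical hsub)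
  have hpow : Q ^ (k + 1) ≤ J := by
    refine powLeOfForallProd Q (k + 1) J fun q hq => ?_
    have h5 := claim Finset.univ q (fun i _ => hq i)
    simpa using h5
  exact hxφ (by rw [hJ]; exact hpow hx)
end

section
/- Let R be a commutative ring, k a positive integer, Q a proper ideal of R, and φ : 𝓘(R) → 𝓘(R) ∪ {∅} a function such that φ(Q) is an ideal of R contained in Q. If Q is a φ-k-absorbing primary ideal of R and Q^{k+1} ⊄ φ(Q), then Q is a k-absorbing primary ideal of R. -/
open Finset

private lemma prod_add_sub_mem {R : Type*} [CommRing R] (Q : Ideal R) {ι : Type*}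
    [DecidableEq ι] (E : Finset ι) (r c : ι → R) (hc : ∀ i, c i ∈ Q) :
    (∏ i ∈ E, (r i + c i)) - ∏ i ∈ E, r i ∈ Q := by
  induction E using Finset.induction_on with
  | empty => simp
  | @insert a E ha ih =>
      rw [Finset.prod_insert ha, Finset.prod_insert ha]
      have : (r a + c a) * ∏ i ∈ E, (r i + c i) - r a * ∏ i ∈ E, r i =
          r a * ((∏ i ∈ E, (r i + c i)) - ∏ i ∈ E, r i) +
            c a * ∏ i ∈ E, (r i + c i) := by ring
      rw [this]
      exact Q.add_mem (Q.mul_mem_left _ ih) (Q.mul_mem_right _ (hc a))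

private lemma pow_le_of_prod_mem {R : Type*} [CommRing R] (Q : Ideal R) :
    ∀ (n : ℕ) (J : Ideal R),
      (∀ q : Fin n → R, (∀ i, q i ∈ Q) → (∏ i, q i) ∈ J) → Q ^ n ≤ J := by
  intro n
  induction n with
  | zero =>
      intro J h
      have h1 : (1 : R) ∈ J := by simpa using h (fun i => i.elim0) (fun i => i.elim0)
      rw [pow_zero, Ideal.one_eq_top]
      exact fun x _ => J.eq_top_iff_one.mpr h1 ▸ trivial
  | succ n ih =>
      intro J h
      rw [pow_succ, Ideal.mul_le]
      intro a ha b hb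
      have hcol : Q ^ n ≤ J.colon (Ideal.span {b}) := by
        apply ih
        intro q hq
        rw [Ideal.mem_colon_span_singleton]
        have := h (Fin.snoc q b) (fun i => by
          induction i using Fin.lastCases with
          | last => simpa using hb
          | cast i => simpa using hq i)
        simpa [Fin.prod_snoc] using this
      exact Ideal.mem_colon_span_singleton.mp (hcol ha)

theorem stmt16 {R : Type*} [CommRing R] (φ : Ideal R → Set R) (k : ℕ) (hk : 0 < k)
    (Q J : Ideal R) (hJ : φ Q = (J : Set R)) (hJQ : J ≤ Q)
    (hQ : IsPhiKAbsorbingPrimary φ k Q)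
    (hpow : ¬ ((Q ^ (k + 1) : Ideal R) : Set R) ⊆ φ Q) :
    IsKAbsorbingPrimary k Q := by
  obtain ⟨hna, hmain⟩ := hQ
  refine ⟨hna, fun r hr => ?_⟩
  by_contra hcon
  push_neg at hcon
  obtain ⟨hA, hB⟩ := hcon
  have claim : ∀ S : Finset (Fin (k + 1)), ∀ q : Fin (k + 1) → R,
      (∀ i ∈ S, q i ∈ Q) → (∏ i ∈ Sᶜ, r i) * ∏ i ∈ S, q i ∈ J := by
    intro S
    induction S using Finset.strongInduction with
    | _ S ih =>
      intro q hq
      by_contra hP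
      set c : Fin (k + 1) → R := fun i => if i ∈ S then q i else 0 with hc
      have hcQ : ∀ i, c i ∈ Q := fun i => by
        by_cases h : i ∈ S <;> simp [hc, h, hq i, Q.zero_mem]
      have hdiff : ∀ E : Finset (Fin (k + 1)),
          (∏ i ∈ E, (r i + c i)) - ∏ i ∈ E, r i ∈ Q :=
        fun E => prod_add_sub_mem Q E r c hcQ
      have hr'Q : (∏ i, (r i + c i)) ∈ Q := by
        have h1 := hdiff Finset.univ
        have h2 : (∏ i, (r i + c i)) =
            ((∏ i, (r i + c i)) - ∏ i, r i) + ∏ i, r i := by ring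
        rw [h2]
        exact Q.add_mem h1 hr
      have expand : (∏ i, (r i + c i)) =
          ∑ T ∈ S.powerset, (∏ i ∈ T, q i) * ∏ i ∈ Tᶜ, r i := by
        rw [show (∏ i, (r i + c i)) = ∏ i, (c i + r i) by
          exact Finset.prod_congr rfl fun i _ => add_comm _ _]
        rw [Finset.prod_add c r Finset.univ]
        rw [← Finset.sum_subset (Finset.powerset_mono.mpr (Finset.subset_univ S))]
        · refine Finset.sum_congr rfl fun T hT => ?_
          rw [Finset.mem_powerset] at hT
          rw [Finset.compl_eq_univ_sdiff]
          congr 1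
          exact Finset.prod_congr rfl fun i hi => by simp [hc, hT hi]
        · intro T _ hTS
          rw [Finset.mem_powerset] at hTS
          obtain ⟨i, hiT, hiS⟩ := Finset.not_subset.mp hTS
          rw [Finset.prod_eq_zero hiT (by simp [hc, hiS]), zero_mul]
      have hr'J : (∏ i, (r i + c i)) ∉ J := by
        intro hmem
        rw [expand] at hmem
        have hS : S ∈ S.powerset := Finset.mem_powerset_self S
        rw [← Finset.add_sum_erase _ _ hS] at hmem
        have hrest : ∑ T ∈ S.powerset.erase S, (∏ i ∈ T, q i) * ∏ i ∈ Tᶜ, r i ∈ J := by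
          refine Ideal.sum_mem _ fun T hT => ?_
          rw [Finset.mem_erase, Finset.mem_powerset] at hT
          have hTS : T ⊂ S := lt_of_le_of_ne hT.2 hT.1
          have := ih T hTS q (fun i hi => hq i (hT.2 hi))
          rwa [mul_comm] at this
        have : (∏ i ∈ S, q i) * ∏ i ∈ Sᶜ, r i ∈ J := by
          have h3 : (∏ i ∈ S, q i) * ∏ i ∈ Sᶜ, r i =
              ((∏ i ∈ S, q i) * ∏ i ∈ Sᶜ, r i +
                ∑ T ∈ S.powerset.erase S, (∏ i ∈ T, q i) * ∏ i ∈ Tᶜ, r i) -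
                ∑ T ∈ S.powerset.erase S, (∏ i ∈ T, q i) * ∏ i ∈ Tᶜ, r i := by ring
          rw [h3]
          exact J.sub_mem hmem hrest
        exact hP (by rwa [mul_comm] at this)
      have hmem : (∏ i, (r i + c i)) ∈ (Q : Set R) \ φ Q := by
        refine ⟨hr'Q, ?_⟩
        rw [hJ]
        exact hr'J
      rcases hmain _ hmem with h1 | ⟨j, hj, h2⟩
      · refine hA ?_
        have hd := hdiff (Finset.univ.erase (Fin.last k))
        have h4 : (∏ i ∈ Finset.univ.erase (Fin.last k), r i) =
            (∏ i ∈ Finset.univ.erase (Fin.last k), (r i + c i)) -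
              ((∏ i ∈ Finset.univ.erase (Fin.last k), (r i + c i)) -
                ∏ i ∈ Finset.univ.erase (Fin.last k), r i) := by ring
        rw [h4]
        exact Q.sub_mem h1 hd
      · refine hB j hj ?_
        have hd := Ideal.le_radical (hdiff (Finset.univ.erase j))
        have h4 : (∏ i ∈ Finset.univ.erase j, r i) =
            (∏ i ∈ Finset.univ.erase j, (r i + c i)) -
              ((∏ i ∈ Finset.univ.erase j, (r i + c i)) -
                ∏ i ∈ Finset.univ.erase j, r i) := by ring
        rw [h4]
        exact Q.radical.sub_mem h2 hd
  apply hpow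
  intro x hx
  rw [hJ]
  refine pow_le_of_prod_mem Q (k + 1) J (fun q hq => ?_) hx
  have := claim Finset.univ q (fun i _ => hq i)
  simpa using this
end

section
/- Let R be a commutative ring, k a positive integer, Q a proper ideal of R, and φ : 𝓘(R) → 𝓘(R) ∪ {∅} a function such that φ(Q) is an ideal of R contained in Q. If Q is a φ-k-absorbing primary ideal of R that is not a k-absorbing primary ideal of R, then √Q = √(φ(Q)). -/
open Finset

theorem stmt17 {R : Type*} [CommRing R] (φ : Ideal R → Set R) (k : ℕ) (hk : 0 < k)
    (Q J : Ideal R) (hJ : φ Q = (J : Set R)) (hJQ : J ≤ Q)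
    (hQ : IsPhiKAbsorbingPrimary φ k Q) (hnot : ¬ IsKAbsorbingPrimary k Q) :
    Q.radical = J.radical := by
  classical
  refine le_antisymm ?_ (Ideal.radical_mono hJQ)
  obtain ⟨hQtop, hφ⟩ := hQ
  rw [IsKAbsorbingPrimary] at hnot
  push_neg at hnot
  obtain ⟨r, hr1, hr2, hr3⟩ := hnot hQtop
  -- expansion identity
  have hexp : ∀ (S A : Finset (Fin (k + 1))) (q : Fin (k + 1) → R),
      (∏ i ∈ A, (if i ∈ S then r i + q i else r i)) =
        ∑ T ∈ (A ∩ S).powerset, (∏ i ∈ T, q i) * ∏ i ∈ A \ T, r i := by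
    intro S A q
    rw [← Finset.prod_inter_mul_prod_diff A S (fun i => if i ∈ S then r i + q i else r i)]
    have h1 : (∏ i ∈ A ∩ S, if i ∈ S then r i + q i else r i) = ∏ i ∈ A ∩ S, (q i + r i) :=
      Finset.prod_congr rfl fun i hi => by
        rw [if_pos (Finset.mem_inter.1 hi).2, add_comm]
    have h2 : (∏ i ∈ A \ S, if i ∈ S then r i + q i else r i) = ∏ i ∈ A \ S, r i :=
      Finset.prod_congr rfl fun i hi => by rw [if_neg (Finset.mem_sdiff.1 hi).2]
    rw [h1, h2, Finset.prod_add, Finset.sum_mul]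
    refine Finset.sum_congr rfl fun T hT => ?_
    have hsub := Finset.mem_powerset.1 hT
    have hdisj : Disjoint ((A ∩ S) \ T) (A \ S) := by
      rw [Finset.disjoint_left]
      intro a ha hb
      exact (Finset.mem_sdiff.1 hb).2 (Finset.mem_inter.1 (Finset.mem_sdiff.1 ha).1).2
    have hset : ((A ∩ S) \ T) ∪ (A \ S) = A \ T := by
      ext x
      have hx : x ∈ T → x ∈ A ∧ x ∈ S := fun h => Finset.mem_inter.1 (hsub h)
      simp only [Finset.mem_union, Finset.mem_sdiff, Finset.mem_inter]
      tauto
    rw [mul_assoc, ← Finset.prod_union hdisj, hset]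
  -- main claim
  have claim : ∀ S : Finset (Fin (k + 1)), ∀ q : Fin (k + 1) → R, (∀ i, q i ∈ Q) →
      (∏ i ∈ S, q i) * (∏ i ∈ univ \ S, r i) ∈ J := by
    intro S
    induction S using Finset.strongInduction with
    | _ S IH =>
      intro q hq
      set s : Fin (k + 1) → R := fun i => if i ∈ S then r i + q i else r i with hs
      have hAdiff : ∀ A : Finset (Fin (k + 1)), (∏ i ∈ A, s i) - ∏ i ∈ A, r i ∈ Q := by
        intro A
        simp only [hs]
        rw [hexp S A q, ← Finset.add_sum_erase _ _ (Finset.empty_mem_powerset (A ∩ S))]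
        simp only [Finset.prod_empty, one_mul, Finset.sdiff_empty, add_sub_cancel_left]
        refine Ideal.sum_mem _ ?_
        intro T hT
        obtain ⟨hT1, hT2⟩ := Finset.mem_erase.1 hT
        obtain ⟨i, hi⟩ := Finset.nonempty_iff_ne_empty.2 hT1
        refine Ideal.mul_mem_right _ _ ?_
        rw [← Finset.mul_prod_erase T q hi]
        exact Ideal.mul_mem_right _ _ (hq i)
      have hsQ : (∏ i, s i) ∈ Q := by
        have h := hAdiff univ
        have he : (∏ i, s i) = ((∏ i ∈ univ, s i) - ∏ i ∈ univ, r i) + ∏ i ∈ univ, r i := by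
          ring
        rw [he]
        exact Q.add_mem h hr1
      have hsJ : (∏ i, s i) ∈ J := by
        by_cases hm : (∏ i, s i) ∈ φ Q
        · rw [hJ] at hm; exact hm
        · rcases hφ s ⟨hsQ, hm⟩ with h | ⟨j, hj, hjm⟩
          · exfalso
            apply hr2
            have h2 := hAdiff (univ.erase (Fin.last k))
            have he : (∏ i ∈ univ.erase (Fin.last k), r i)
                = (∏ i ∈ univ.erase (Fin.last k), s i)
                  - ((∏ i ∈ univ.erase (Fin.last k), s i)
                      - ∏ i ∈ univ.erase (Fin.last k), r i) := by ring
            rw [he]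
            exact Q.sub_mem h h2
          · exfalso
            apply hr3 j hj
            have h2 := Ideal.le_radical (hAdiff (univ.erase j))
            have he : (∏ i ∈ univ.erase j, r i)
                = (∏ i ∈ univ.erase j, s i)
                  - ((∏ i ∈ univ.erase j, s i) - ∏ i ∈ univ.erase j, r i) := by ring
            rw [he]
            exact Q.radical.sub_mem hjm h2
      have hexp2 := hexp S univ q
      rw [Finset.univ_inter] at hexp2
      have hsJ' : (∑ T ∈ S.powerset, (∏ i ∈ T, q i) * ∏ i ∈ univ \ T, r i) ∈ J := by
        rw [← hexp2]
        have : (∏ i ∈ univ, (if i ∈ S then r i + q i else r i)) = ∏ i, s i := by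
          simp only [hs]
        rw [this]
        exact hsJ
      rw [← Finset.add_sum_erase _ _ (Finset.mem_powerset_self S)] at hsJ'
      have hrest : (∑ T ∈ S.powerset.erase S, (∏ i ∈ T, q i) * ∏ i ∈ univ \ T, r i) ∈ J := by
        refine Ideal.sum_mem _ ?_
        intro T hT
        obtain ⟨hT1, hT2⟩ := Finset.mem_erase.1 hT
        exact IH T (lt_of_le_of_ne (Finset.mem_powerset.1 hT2) hT1) q hq
      have := J.sub_mem hsJ' hrest
      simpa using this
  have hQle : Q ≤ J.radical := by
    intro x hx
    have h := claim univ (fun _ => x) (fun _ => hx)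
    refine ⟨k + 1, ?_⟩
    simpa using h
  calc Q.radical ≤ J.radical.radical := Ideal.radical_mono hQle
    _ = J.radical := Ideal.radical_idem J
end

section
/- Let h : R₁ → R₂ be a φ₁-φ₂-homomorphism of commutative rings, where φ₁ and φ₂ are reduction functions of 𝓘(R₁) and 𝓘(R₂) respectively. If Q₂ is a φ₂-k-absorbing primary ideal of R₂, then the preimage h⁻¹(Q₂) is a φ₁-k-absorbing primary ideal of R₁. -/
open Finset

theorem stmt19 {R₁ R₂ : Type*} [CommRing R₁] [CommRing R₂]
    (φ₁ : Ideal R₁ → Set R₁) (φ₂ : Ideal R₂ → Set R₂)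
    (hφ₁ : IsReductionFunction φ₁) (hφ₂ : IsReductionFunction φ₂)
    (h : R₁ →+* R₂) (hhom : ∀ I : Ideal R₂, φ₁ (I.comap h) = h ⁻¹' (φ₂ I))
    (k : ℕ) (hk : 0 < k) (Q₂ : Ideal R₂) (hQ₂ : IsPhiKAbsorbingPrimary φ₂ k Q₂) :
    IsPhiKAbsorbingPrimary φ₁ k (Q₂.comap h) := by
  obtain ⟨hne, habs⟩ := hQ₂
  refine ⟨fun htop => hne (Ideal.eq_top_iff_one _ |>.mpr ?_), fun r hr => ?_⟩
  · have : (1 : R₁) ∈ Q₂.comap h := htop ▸ Submodule.mem_top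
    simpa using this
  · obtain ⟨hmem, hnot⟩ := hr
    have hprod : (∏ i, h (r i)) ∈ (Q₂ : Set R₂) \ φ₂ Q₂ := by
      constructor
      · simpa [← map_prod] using hmem
      · intro hc
        apply hnot
        rw [hhom Q₂]
        simpa [← map_prod] using hc
    rcases habs (fun i => h (r i)) hprod with h1 | ⟨j, hj, hj2⟩
    · left
      simpa [← map_prod, Ideal.mem_comap] using h1
    · right
      refine ⟨j, hj, ?_⟩
      rw [← Ideal.comap_radical]
      simpa [← map_prod, Ideal.mem_comap] using hj2
end
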